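/- arXiv:2306.02430 — 5 statements merged into one kernel-verified Lean document; each statement's English description precedes it below -/
import Mathlib

section
/- There exist a strictly increasing function M : ℝ → ℝ and integrable real-valued random variables X and Y on a common probability space, with M∘X and M∘Y integrable, such that E[X] > E[Y] but E[M∘X] < E[M∘Y]. Consequently, monotonicity of the mixing transformation applied to utility distributions is not sufficient to guarantee Distributional IGM: simply replacing deterministic utilities by random variables inside a monotonic factorization function can reverse the order of expected returns and change the greedy action. -/
open MeasureTheory

lemma half_coin_prob :
    IsProbabilityMeasure ((1/2 : ENNReal) • (Measure.dirac true + Measure.dirac false)) := by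
  constructor
  simp [Measure.add_apply]
  exact ENNReal.inv_two_add_inv_two

lemma half_coin_integral (f : Bool → ℝ) :
    (∫ ω, f ω ∂((1/2 : ENNReal) • (Measure.dirac true + Measure.dirac false)))
      = (f true + f false) / 2 := by
  haveI := half_coin_prob
  rw [integral_smul_measure, integral_add_measure Integrable.of_finite Integrable.of_finite,
    integral_dirac, integral_dirac]
  simp
  ring

/-- There exist a strictly increasing `M : ℝ → ℝ` and integrable random variables `X`, `Y`
on a common probability space, with `M ∘ X` and `M ∘ Y` integrable, such that
`E[X] > E[Y]` but `E[M ∘ X] < E[M ∘ Y]`: monotonicity applied to utility distributions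
is not sufficient for Distributional IGM. -/
theorem monotone_not_sufficient_for_digm :
    ∃ M : ℝ → ℝ, StrictMono M ∧
      ∃ (Ω : Type) (_ : MeasurableSpace Ω) (P : Measure Ω) (_ : IsProbabilityMeasure P)
        (X Y : Ω → ℝ),
        Integrable X P ∧ Integrable Y P ∧
        Integrable (M ∘ X) P ∧ Integrable (M ∘ Y) P ∧
        (∫ ω, Y ω ∂P) < (∫ ω, X ω ∂P) ∧
        (∫ ω, (M ∘ X) ω ∂P) < ∫ ω, (M ∘ Y) ω ∂P := by
  haveI := half_coin_prob
  refine ⟨fun x => if x < 0 then x else x / 100, ?_, Bool, inferInstance,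
    (1/2 : ENNReal) • (Measure.dirac true + Measure.dirac false), half_coin_prob,
    fun b => if b then 100 else -100, fun _ => -1, .of_finite, .of_finite,
    .of_finite, .of_finite, ?_, ?_⟩
  · intro a b hab
    dsimp only
    split_ifs <;> linarith
  · rw [half_coin_integral, half_coin_integral]
    norm_num
  · rw [half_coin_integral, half_coin_integral]
    norm_num [Function.comp]
end

section
/- (DFAC Theorem) Let K be a positive integer, let U_1, ..., U_K be finite nonempty action sets with joint action space U = U_1 × ... × U_K, and let (Ω, P) be a probability space. Let Q_k : U_k → ℝ and Q_jt : U → ℝ be functions such that [Q_k] satisfy IGM for Q_jt (a joint action u maximizes Q_jt if and only if each component u_k maximizes Q_k). Suppose that for each joint action u ∈ U, Z_jt(u) : Ω → ℝ is an integrable random variable of the form Z_jt(u) = Q_jt(u) + Φ(u) almost surely, where Φ(u) : Ω → ℝ is integrable with E[Φ(u)] = 0. Then a joint action u maximizes u ↦ E[Z_jt(u)] over U if and only if each component u_k maximizes Q_k over U_k; i.e., the mean-shape decomposed factorization satisfies Distributional IGM. -/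
open MeasureTheory

/-- DFAC Theorem: if `[Q k]` satisfy IGM for `Qjt` and `Zjt u = Qjt u + Φ u` a.s. with
`E[Φ u] = 0`, then a joint action maximizes `u ↦ E[Zjt u]` iff each component maximizes
`Q k`; the mean-shape decomposed factorization satisfies Distributional IGM. -/
theorem dfac_theorem {K : ℕ} (hK : 0 < K) (U : Fin K → Type*)
    [∀ k, Fintype (U k)] [∀ k, Nonempty (U k)]
    {Ω : Type*} [MeasurableSpace Ω] (P : Measure Ω) [IsProbabilityMeasure P]
    (Q : ∀ k, U k → ℝ) (Qjt : (∀ k, U k) → ℝ)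
    (hIGM : ∀ u : ∀ k, U k,
      (∀ v : ∀ k, U k, Qjt v ≤ Qjt u) ↔ (∀ k, ∀ vk : U k, Q k vk ≤ Q k (u k)))
    (Zjt : (∀ k, U k) → Ω → ℝ) (Φ : (∀ k, U k) → Ω → ℝ)
    (hZint : ∀ u, Integrable (Zjt u) P)
    (hΦint : ∀ u, Integrable (Φ u) P)
    (hdecomp : ∀ u, Zjt u =ᵐ[P] fun ω => Qjt u + Φ u ω)
    (hΦmean : ∀ u, (∫ ω, Φ u ω ∂P) = 0) :
    ∀ u : ∀ k, U k,
      (∀ v : ∀ k, U k, (∫ ω, Zjt v ω ∂P) ≤ ∫ ω, Zjt u ω ∂P) ↔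
      (∀ k, ∀ vk : U k, Q k vk ≤ Q k (u k)) := by
  have hmean : ∀ u, (∫ ω, Zjt u ω ∂P) = Qjt u := by
    intro u
    rw [integral_congr_ae (hdecomp u), integral_add (integrable_const _) (hΦint u),
      integral_const, hΦmean u]
    simp
  intro u
  simp only [hmean]
  exact hIGM u
end

section
/- Let K be a positive integer and let U_1, ..., U_K be finite nonempty action sets with joint action space U = U_1 × ... × U_K. Let Q_k : U_k → ℝ, define V_k = max_{u_k} Q_k(u_k) and the advantages A_k(u_k) = Q_k(u_k) − V_k ≤ 0. Let c_1, ..., c_K ∈ ℝ and let λ_k : U → ℝ satisfy λ_k(u) > 0 for all u and k. Define the QPLEX joint value Q_jt(u) = Σ_{k=1}^K c_k + Σ_{k=1}^K λ_k(u)·A_k(u_k). Then a joint action u maximizes Q_jt over U if and only if each component u_k maximizes Q_k over U_k; i.e., the duplex dueling (QPLEX) factorization satisfies IGM. -/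
/-- The duplex dueling (QPLEX) factorization satisfies IGM: with `V k = max Q k`,
advantages `A k u_k = Q k u_k - V k ≤ 0`, constants `c k`, and positive weights
`λ k u > 0`, the joint value `Qjt u = ∑ c k + ∑ λ k u * A k (u k)` is maximized at `u`
iff each component `u k` maximizes `Q k`. -/
theorem qplex_igm {K : ℕ} (hK : 0 < K) (U : Fin K → Type*)
    [∀ k, Fintype (U k)] [∀ k, Nonempty (U k)]
    (Q : ∀ k, U k → ℝ) (V : Fin K → ℝ)
    (hV : ∀ k, IsGreatest (Set.range (Q k)) (V k))
    (A : ∀ k, U k → ℝ)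
    (hA : ∀ k (uk : U k), A k uk = Q k uk - V k)
    (c : Fin K → ℝ) (lam : Fin K → (∀ k, U k) → ℝ)
    (hlam : ∀ k (u : ∀ k, U k), 0 < lam k u)
    (Qjt : (∀ k, U k) → ℝ)
    (hQjt : ∀ u : ∀ k, U k, Qjt u = (∑ k, c k) + ∑ k, lam k u * A k (u k)) :
    ∀ u : ∀ k, U k,
      (∀ v : ∀ k, U k, Qjt v ≤ Qjt u) ↔
      (∀ k, ∀ vk : U k, Q k vk ≤ Q k (u k)) := by

  -- Preliminaries
  have hAle : ∀ k (uk : U k), A k uk ≤ 0 := by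
    intro k uk
    rw [hA]
    have := (hV k).2 ⟨uk, rfl⟩
    linarith
  -- a maximizing joint action exists
  obtain ⟨w, hw⟩ : ∃ w : ∀ k, U k, ∀ k, Q k (w k) = V k := by
    have : ∀ k, ∃ x : U k, Q k x = V k := fun k => (hV k).1
    exact ⟨fun k => (this k).choose, fun k => (this k).choose_spec⟩
  have hQw : Qjt w = ∑ k, c k := by
    rw [hQjt]
    have : ∀ k ∈ Finset.univ, lam k w * A k (w k) = 0 := by
      intro k _
      rw [hA, hw k]; ring
    rw [Finset.sum_congr rfl this]
    simp
  intro u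
  constructor
  · intro hmax k vk
    have h1 : (∑ k, c k) ≤ Qjt u := hQw ▸ hmax w
    rw [hQjt] at h1
    have hsum : 0 ≤ ∑ k, lam k u * A k (u k) := by linarith
    have hterm : ∀ j ∈ Finset.univ, lam j u * A j (u j) ≤ 0 := fun j _ =>
      mul_nonpos_of_nonneg_of_nonpos (hlam j u).le (hAle j (u j))
    have hz : lam k u * A k (u k) = 0 := by
      by_contra hne
      have hlt : lam k u * A k (u k) < 0 := lt_of_le_of_ne (hterm k (Finset.mem_univ k)) hne
      have : ∑ j, lam j u * A j (u j) < 0 :=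
        Finset.sum_neg' hterm ⟨k, Finset.mem_univ k, hlt⟩
      linarith
    have hA0 : A k (u k) = 0 := by
      rcases mul_eq_zero.mp hz with h | h
      · exact absurd h (hlam k u).ne'
      · exact h
    have : Q k (u k) = V k := by rw [hA] at hA0; linarith
    rw [this]
    exact (hV k).2 ⟨vk, rfl⟩
  · intro hcomp v
    have hu0 : ∀ k, A k (u k) = 0 := by
      intro k
      have h1 : V k ≤ Q k (u k) := by
        obtain ⟨x, hx⟩ := (hV k).1
        calc V k = Q k x := hx.symm
          _ ≤ Q k (u k) := hcomp k x
      have h2 := (hV k).2 ⟨u k, rfl⟩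
      rw [hA]; linarith
    have hQu : Qjt u = ∑ k, c k := by
      rw [hQjt]
      have : ∀ k ∈ Finset.univ, lam k u * A k (u k) = 0 := by
        intro k _; rw [hu0 k]; ring
      rw [Finset.sum_congr rfl this]; simp
    rw [hQu, hQjt]
    have : ∑ k, lam k v * A k (v k) ≤ 0 :=
      Finset.sum_nonpos fun j _ =>
        mul_nonpos_of_nonneg_of_nonpos (hlam j v).le (hAle j (v j))
    linarith
end

section
/- Let μ be a probability measure on ℝ with finite first moment, let F(x) = μ((−∞, x]) be its cumulative distribution function, and let F⁻¹(ω) = inf { x : ω ≤ F(x) } for ω ∈ (0,1) be its quantile function. Then the expectation of μ equals the integral of the quantile function over (0,1): ∫_ℝ x dμ(x) = ∫_0^1 F⁻¹(ω) dω. -/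
/-!
On `(0, 1)` the quantile function is the lower adjoint of the cdf, `F⁻¹(ω) ≤ x ↔ ω ≤ F x`, so the
`F⁻¹`-preimage of `(-∞, x]` in `(0, 1)` is `(0, F x]`, of Lebesgue measure `F x`. Thus `F⁻¹` pushes
the uniform distribution on `(0, 1)` forward to `μ`, and the identity is the change of variables
formula for this pushforward.
-/

open MeasureTheory Set ProbabilityTheory

namespace StieltjesFunction

/-- Right continuity puts the infimum of `{y | ω ≤ f y}` into that set. -/
theorem csInf_le_iff (f : StieltjesFunction ℝ) {ω : ℝ} (hne : {y | ω ≤ f y}.Nonempty)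
    (hbdd : BddBelow {y | ω ≤ f y}) (x : ℝ) : sInf {y | ω ≤ f y} ≤ x ↔ ω ≤ f x := by
  refine ⟨fun hx => ?_, fun hx => csInf_le hbdd hx⟩
  have h_right : ∀ y ∈ Ioi x, ω ≤ f y := fun y hy => by
    obtain ⟨z, hz, hzy⟩ := exists_lt_of_csInf_lt hne (hx.trans_lt hy)
    exact hz.trans (f.mono hzy.le)
  exact ge_of_tendsto ((f.right_continuous x).mono Ioi_subset_Ici_self).tendsto
    (eventually_nhdsWithin_of_forall h_right)

end StieltjesFunction

theorem Real.volume_Ioo_inter_Iic (a b t : ℝ) :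
    volume (Ioo a b ∩ Iic t) = ENNReal.ofReal (min b t - a) := by
  rw [measure_congr (Ioo_ae_eq_Ioc.inter (ae_eq_refl (Iic t))), Ioc_inter_Iic, Real.volume_Ioc]

namespace ProbabilityTheory

variable (μ : Measure ℝ)

/-- Meaningful only for `ω ∈ (0, 1)`: outside, the infimum is over `univ` or `∅`, whose `sInf` is
the junk value `0`. -/
noncomputable def quantile (ω : ℝ) : ℝ := sInf {x | ω ≤ cdf μ x}

theorem quantile_le_iff {ω : ℝ} (hω : ω ∈ Ioo 0 1) (x : ℝ) :
    quantile μ ω ≤ x ↔ ω ≤ cdf μ x := by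
  refine (cdf μ).csInf_le_iff ?_ ?_ x
  · exact ((tendsto_cdf_atTop μ).eventually (eventually_ge_nhds hω.2)).exists
  · obtain ⟨y, hy⟩ := ((tendsto_cdf_atBot μ).eventually (eventually_lt_nhds hω.1)).exists
    exact ⟨y, fun z hz => le_of_not_gt fun hzy => (hz.trans (monotone_cdf μ hzy.le)).not_gt hy⟩

theorem monotoneOn_quantile : MonotoneOn (quantile μ) (Ioo 0 1) := fun _ hω _ hω' hle =>
  (quantile_le_iff μ hω _).2 <| hle.trans <| (quantile_le_iff μ hω' _).1 le_rfl

theorem aemeasurable_quantile : AEMeasurable (quantile μ) (volume.restrict (Ioo 0 1)) :=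
  aemeasurable_restrict_of_monotoneOn measurableSet_Ioo (monotoneOn_quantile μ)

theorem map_quantile_volume_Ioo [IsProbabilityMeasure μ] :
    (volume.restrict (Ioo 0 1)).map (quantile μ) = μ := by
  refine Measure.ext_of_Iic _ _ fun x => ?_
  have h_preimage : quantile μ ⁻¹' Iic x ∩ Ioo 0 1 = Ioo 0 1 ∩ Iic (cdf μ x) := by
    ext ω
    simp only [mem_inter_iff, mem_preimage, mem_Iic]
    exact ⟨fun ⟨hq, hω⟩ => ⟨hω, (quantile_le_iff μ hω x).1 hq⟩,
      fun ⟨hω, hF⟩ => ⟨(quantile_le_iff μ hω x).2 hF, hω⟩⟩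
  rw [Measure.map_apply_of_aemeasurable (aemeasurable_quantile μ) measurableSet_Iic,
    Measure.restrict_apply' measurableSet_Ioo, h_preimage, Real.volume_Ioo_inter_Iic,
    min_eq_right (cdf_le_one μ x), sub_zero, ofReal_cdf]

end ProbabilityTheory

theorem expectation_eq_integral_quantile_general (μ : Measure ℝ) [IsProbabilityMeasure μ] :
    (∫ x, x ∂μ) =
      ∫ ω in Set.Ioo (0:ℝ) 1, sInf {x : ℝ | ω ≤ (μ (Set.Iic x)).toReal} := by
  conv_lhs => rw [← map_quantile_volume_Ioo μ]
  rw [integral_map (f := fun x => x) (aemeasurable_quantile μ) continuous_id.aestronglyMeasurable]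
  simp only [quantile, cdf_eq_real, measureReal_def]

/-- The expectation of a probability measure `μ` on `ℝ` with finite first moment equals
the integral of its quantile function over `(0,1)`:
`∫ x dμ = ∫_0^1 F⁻¹(ω) dω` where `F⁻¹(ω) = inf {x | ω ≤ F x}` and `F x = μ (Iic x)`. -/
theorem expectation_eq_integral_quantile (μ : Measure ℝ) [IsProbabilityMeasure μ]
    (hint : Integrable (fun x : ℝ => x) μ) :
    (∫ x, x ∂μ) =
      ∫ ω in Set.Ioo (0:ℝ) 1, sInf {x : ℝ | ω ≤ (μ (Set.Iic x)).toReal} :=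
  expectation_eq_integral_quantile_general μ
end

section
/- (DMIX satisfies DIGM) Let K be a positive integer, let U_1, ..., U_K be finite nonempty action sets with joint action space U = U_1 × ... × U_K, and let (Ω, P) be a probability space. For each k and u_k ∈ U_k let Z_k(u_k) : Ω → ℝ be integrable, and set Q_k(u_k) = E[Z_k(u_k)]. Let M : ℝ^K → ℝ be nondecreasing in each coordinate, and define for each joint action u the random variable Z_jt(u) = M(Q_1(u_1), ..., Q_K(u_K)) + Σ_{k=1}^K ( Z_k(u_k) − Q_k(u_k) ). Then any joint action u* whose components u_k* each maximize Q_k over U_k maximizes u ↦ E[Z_jt(u)] over U. -/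
open MeasureTheory

/-! The shape term `∑ k, (Z k (u k) - Q k (u k))` is a sum of centred integrable variables, so
it has mean zero and `E[Zjt u] = M (Q · (u ·))`. Monotonicity of `M` then transfers the
componentwise maximality of `ustar` to the joint expected value. -/

section CenteredSum

variable {Ω ι : Type*} [MeasurableSpace Ω] {μ : Measure Ω} [IsProbabilityMeasure μ]

theorem integral_sub_eq_zero_of_eq_integral {f : Ω → ℝ} (hf : Integrable f μ) {q : ℝ}
    (hq : q = ∫ ω, f ω ∂μ) : ∫ ω, (f ω - q) ∂μ = 0 := by
  rw [integral_sub hf (integrable_const q), integral_const, probReal_univ, one_smul, hq, sub_self]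

theorem integral_const_add_sum_centered (s : Finset ι) {f : ι → Ω → ℝ}
    (hf : ∀ i ∈ s, Integrable (f i) μ) {q : ι → ℝ} (hq : ∀ i ∈ s, q i = ∫ ω, f i ω ∂μ)
    (c : ℝ) :
    ∫ ω, (c + ∑ i ∈ s, (f i ω - q i)) ∂μ = c := by
  have hcentered : ∀ i ∈ s, Integrable (fun ω => f i ω - q i) μ :=
    fun i hi => (hf i hi).sub (integrable_const _)
  rw [integral_add (integrable_const c) (integrable_finsetSum s hcentered),
    integral_finsetSum s hcentered, integral_const, probReal_univ, one_smul,
    Finset.sum_eq_zero fun i hi => integral_sub_eq_zero_of_eq_integral (hf i hi) (hq i hi),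
    add_zero]

end CenteredSum

theorem dmix_digm_greedy_general {K : ℕ} (U : Fin K → Type*)
    {Ω : Type*} [MeasurableSpace Ω] (P : Measure Ω) [IsProbabilityMeasure P]
    (Z : ∀ k, U k → Ω → ℝ)
    (hZ : ∀ k (uk : U k), Integrable (Z k uk) P)
    (Q : ∀ k, U k → ℝ)
    (hQ : ∀ k (uk : U k), Q k uk = ∫ ω, Z k uk ω ∂P)
    (M : (Fin K → ℝ) → ℝ)
    (hM : ∀ x y : Fin K → ℝ, (∀ k, x k ≤ y k) → M x ≤ M y)
    (Zjt : (∀ k, U k) → Ω → ℝ)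
    (hZjt : ∀ (u : ∀ k, U k) (ω : Ω),
      Zjt u ω = M (fun k => Q k (u k)) + ∑ k, (Z k (u k) ω - Q k (u k)))
    (ustar : ∀ k, U k)
    (hstar : ∀ k, ∀ vk : U k, Q k vk ≤ Q k (ustar k)) :
    ∀ v : ∀ k, U k, (∫ ω, Zjt v ω ∂P) ≤ ∫ ω, Zjt ustar ω ∂P := by
  have hmean : ∀ u : ∀ k, U k, ∫ ω, Zjt u ω ∂P = M (fun k => Q k (u k)) := fun u => by
    simp_rw [hZjt u]
    exact integral_const_add_sum_centered Finset.univ (fun k _ => hZ k (u k))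
      (fun k _ => hQ k (u k)) _
  intro v
  rw [hmean v, hmean ustar]
  exact hM _ _ fun k => hstar k (v k)

/-- DMIX satisfies the DIGM greedy-action condition: with `Q k u_k = E[Z k u_k]`, a
monotonic mixing function `M`, and
`Zjt u = M (Q 1 (u 1), ..., Q K (u K)) + ∑ k (Z k (u k) - Q k (u k))`,
any joint action whose components individually maximize the expected utilities
maximizes `u ↦ E[Zjt u]`. -/
theorem dmix_digm_greedy {K : ℕ} (hK : 0 < K) (U : Fin K → Type*)
    [∀ k, Fintype (U k)] [∀ k, Nonempty (U k)]
    {Ω : Type*} [MeasurableSpace Ω] (P : Measure Ω) [IsProbabilityMeasure P]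
    (Z : ∀ k, U k → Ω → ℝ)
    (hZ : ∀ k (uk : U k), Integrable (Z k uk) P)
    (Q : ∀ k, U k → ℝ)
    (hQ : ∀ k (uk : U k), Q k uk = ∫ ω, Z k uk ω ∂P)
    (M : (Fin K → ℝ) → ℝ)
    (hM : ∀ x y : Fin K → ℝ, (∀ k, x k ≤ y k) → M x ≤ M y)
    (Zjt : (∀ k, U k) → Ω → ℝ)
    (hZjt : ∀ (u : ∀ k, U k) (ω : Ω),
      Zjt u ω = M (fun k => Q k (u k)) + ∑ k, (Z k (u k) ω - Q k (u k)))
    (ustar : ∀ k, U k)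
    (hstar : ∀ k, ∀ vk : U k, Q k vk ≤ Q k (ustar k)) :
    ∀ v : ∀ k, U k, (∫ ω, Zjt v ω ∂P) ≤ ∫ ω, Zjt ustar ω ∂P :=
  dmix_digm_greedy_general U P Z hZ Q hQ M hM Zjt hZjt ustar hstar
end
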